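/- arXiv:1307.0810 — 8 statements merged into one kernel-verified Lean document; each statement's English description precedes it below -/
import Mathlib

section
/- For any positive semidefinite operator E on a d-dimensional complex Hilbert space with 0 ≤ E ≤ I, any unit vector ψ, any orthonormal basis {b_1,...,b_d}, and any 0 < p < 1, the reliability R_{ψ,p}(E) = p⟨ψ|diag E|ψ⟩ + (1−p)⟨ψ|(I−E)|ψ⟩ is strictly less than 1, where diag E = ∑_k |b_k⟩⟨b_k|E|b_k⟩⟨b_k|. -/
/-!
Write `R = p A + (1 - p)(1 - B)` with `A = ⟨ψ|diag E|ψ⟩` and `B = ⟨ψ|E|ψ⟩`, so that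
`1 - R = p (1 - A) + (1 - p) B`. Both terms are nonnegative: `B ≥ 0` because `E ≥ 0`, and
`1 - A = ⟨ψ|diag (1 - E)|ψ⟩ = ∑ₖ ⟨bₖ|(1 - E)|bₖ⟩ |⟨bₖ|ψ⟩|² ≥ 0` because `diag` is unital and
`I - E ≥ 0`. If both vanished, then `Eψ = 0`, and every `bₖ` with `⟨bₖ|ψ⟩ ≠ 0` would satisfy
`(I - E) bₖ = 0`, i.e. be a fixed vector of the Hermitian `E`, hence orthogonal to `ψ ∈ ker E`.
So all `⟨bₖ|ψ⟩` would vanish, contradicting Parseval's `∑ₖ |⟨bₖ|ψ⟩|² = ‖ψ‖² = 1`.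
-/

open Matrix
open scoped ComplexOrder

variable {n 𝕜 : Type*} [Fintype n] [RCLike 𝕜]

theorem Matrix.dotProduct_vecMulVec_mulVec {R : Type*} [CommSemiring R] (x u v y : n → R) :
    x ⬝ᵥ (vecMulVec u v *ᵥ y) = (x ⬝ᵥ u) * (v ⬝ᵥ y) := by
  simp [vecMulVec_mulVec, dotProduct_smul, mul_comm]

theorem Matrix.sum_vecMulVec_star_self_eq_one {R : Type*} [CommRing R] [StarRing R]
    [DecidableEq n] {b : n → n → R} (hb : ∀ i j, star (b i) ⬝ᵥ b j = if i = j then 1 else 0) :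
    ∑ k, vecMulVec (b k) (star (b k)) = 1 := by
  set M : Matrix n n R := (of b)ᵀ
  have hM : Mᴴ * M = 1 := by
    ext i j
    simpa [M, mul_apply, one_apply, dotProduct] using hb i j
  rw [← mul_eq_one_comm.mp hM]
  ext i j
  simp [M, mul_apply, vecMulVec_apply, Matrix.sum_apply]

/-- The paper's `diag E`, taken in the basis `b`. -/
noncomputable def Matrix.dephasing (b : n → n → 𝕜) (E : Matrix n n 𝕜) : Matrix n n 𝕜 :=
  ∑ k, (star (b k) ⬝ᵥ (E *ᵥ b k)) • vecMulVec (b k) (star (b k))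

theorem Matrix.dotProduct_dephasing_mulVec (b : n → n → 𝕜) (E : Matrix n n 𝕜) (ψ : n → 𝕜) :
    star ψ ⬝ᵥ (dephasing b E *ᵥ ψ) =
      ∑ k, star (b k) ⬝ᵥ (E *ᵥ b k) * (star (star (b k) ⬝ᵥ ψ) * (star (b k) ⬝ᵥ ψ)) := by
  simp only [dephasing, sum_mulVec, dotProduct_sum, smul_mulVec, dotProduct_smul, smul_eq_mul,
    dotProduct_vecMulVec_mulVec]
  simp_rw [star_dotProduct ψ]

theorem Matrix.PosSemidef.dotProduct_dephasing_mulVec_nonneg {E : Matrix n n 𝕜}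
    (hE : E.PosSemidef) (b : n → n → 𝕜) (ψ : n → 𝕜) :
    0 ≤ star ψ ⬝ᵥ (dephasing b E *ᵥ ψ) := by
  rw [dotProduct_dephasing_mulVec]
  exact Finset.sum_nonneg fun k _ =>
    mul_nonneg (hE.dotProduct_mulVec_nonneg _) (star_mul_self_nonneg _)

theorem Matrix.IsHermitian.dotProduct_eq_zero_of_mulVec_eq_self_of_mulVec_eq_zero
    {E : Matrix n n 𝕜} (hE : E.IsHermitian) {v ψ : n → 𝕜} (hv : E *ᵥ v = v)
    (hψ : E *ᵥ ψ = 0) : star v ⬝ᵥ ψ = 0 := by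
  rw [← hv, star_mulVec, ← dotProduct_mulVec, hE.eq, hψ, dotProduct_zero]

section Orthonormal

variable [DecidableEq n] {b : n → n → 𝕜}
  (hb : ∀ i j, star (b i) ⬝ᵥ b j = if i = j then 1 else 0)
include hb

theorem Matrix.sum_star_mul_self_dotProduct (ψ : n → 𝕜) :
    ∑ k, star (star (b k) ⬝ᵥ ψ) * (star (b k) ⬝ᵥ ψ) = star ψ ⬝ᵥ ψ :=
  calc ∑ k, star (star (b k) ⬝ᵥ ψ) * (star (b k) ⬝ᵥ ψ)
      = star ψ ⬝ᵥ ((∑ k, vecMulVec (b k) (star (b k))) *ᵥ ψ) := by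
        simp only [sum_mulVec, dotProduct_sum, dotProduct_vecMulVec_mulVec]
        simp_rw [star_dotProduct ψ]
    _ = star ψ ⬝ᵥ ψ := by rw [sum_vecMulVec_star_self_eq_one hb, one_mulVec]

theorem Matrix.dephasing_one_sub (E : Matrix n n 𝕜) :
    dephasing b (1 - E) = 1 - dephasing b E := by
  have hunit k : star (b k) ⬝ᵥ b k = 1 := by simpa using hb k k
  simp only [dephasing, sub_mulVec, one_mulVec, dotProduct_sub, hunit, sub_smul, one_smul,
    Finset.sum_sub_distrib, sum_vecMulVec_star_self_eq_one hb]

theorem Matrix.one_sub_dotProduct_dephasing_mulVec {E : Matrix n n 𝕜} {ψ : n → 𝕜}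
    (hψ : star ψ ⬝ᵥ ψ = 1) :
    1 - star ψ ⬝ᵥ (dephasing b E *ᵥ ψ) = star ψ ⬝ᵥ (dephasing b (1 - E) *ᵥ ψ) := by
  rw [dephasing_one_sub hb, sub_mulVec, one_mulVec, dotProduct_sub, hψ]

theorem Matrix.dotProduct_dephasing_mulVec_le_one {E : Matrix n n 𝕜} {ψ : n → 𝕜}
    (hψ : star ψ ⬝ᵥ ψ = 1) (hE' : (1 - E).PosSemidef) :
    star ψ ⬝ᵥ (dephasing b E *ᵥ ψ) ≤ 1 := by
  rw [← sub_nonneg, one_sub_dotProduct_dephasing_mulVec hb hψ]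
  exact hE'.dotProduct_dephasing_mulVec_nonneg b ψ

theorem Matrix.dotProduct_dephasing_mulVec_lt_one {E : Matrix n n 𝕜} {ψ : n → 𝕜}
    (hψ : star ψ ⬝ᵥ ψ = 1) (hE : E.IsHermitian) (hE' : (1 - E).PosSemidef)
    (hEψ : E *ᵥ ψ = 0) : star ψ ⬝ᵥ (dephasing b E *ᵥ ψ) < 1 := by
  rw [← sub_pos, one_sub_dotProduct_dephasing_mulVec hb hψ, dotProduct_dephasing_mulVec]
  have hterm_nonneg : ∀ k ∈ Finset.univ,
      0 ≤ star (b k) ⬝ᵥ ((1 - E) *ᵥ b k) * (star (star (b k) ⬝ᵥ ψ) * (star (b k) ⬝ᵥ ψ)) :=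
    fun k _ => mul_nonneg (hE'.dotProduct_mulVec_nonneg _) (star_mul_self_nonneg _)
  refine lt_of_le_of_ne (Finset.sum_nonneg hterm_nonneg) fun h => ?_
  have hterm := (Finset.sum_eq_zero_iff_of_nonneg hterm_nonneg).mp h.symm
  have hweight k : star (star (b k) ⬝ᵥ ψ) * (star (b k) ⬝ᵥ ψ) = 0 := by
    rcases mul_eq_zero.mp (hterm k (Finset.mem_univ k)) with hk | hk
    · have hfixed := (hE'.dotProduct_mulVec_zero_iff _).mp hk
      rw [sub_mulVec, one_mulVec, sub_eq_zero] at hfixed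
      rw [hE.dotProduct_eq_zero_of_mulVec_eq_self_of_mulVec_eq_zero hfixed.symm hEψ, mul_zero]
    · exact hk
  have hparseval := sum_star_mul_self_dotProduct hb ψ
  rw [Finset.sum_eq_zero fun k _ => hweight k, hψ] at hparseval
  exact zero_ne_one hparseval

end Orthonormal

theorem mul_add_one_sub_mul_one_sub_lt_one {R : Type*} [CommRing R] [PartialOrder R]
    [IsStrictOrderedRing R] {p a b : R} (hp0 : 0 < p) (hp1 : p < 1) (ha : a ≤ 1) (hb : 0 ≤ b)
    (hab : b = 0 → a < 1) : p * a + (1 - p) * (1 - b) < 1 := by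
  have h : 1 - (p * a + (1 - p) * (1 - b)) = p * (1 - a) + (1 - p) * b := by ring
  rw [← sub_pos, h]
  rcases hb.eq_or_lt with rfl | hb
  · simpa using mul_pos hp0 (sub_pos.mpr (hab rfl))
  · exact add_pos_of_nonneg_of_pos (mul_nonneg hp0.le (sub_nonneg.mpr ha))
      (mul_pos (sub_pos.mpr hp1) hb)

theorem stmt_0_general (d : ℕ)
    (b : Fin d → (Fin d → ℂ))
    (hb : ∀ i j, star (b i) ⬝ᵥ b j = if i = j then 1 else 0)
    (ψ : Fin d → ℂ) (hψ : star ψ ⬝ᵥ ψ = 1)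
    (p : ℝ) (hp0 : 0 < p) (hp1 : p < 1)
    (E : Matrix (Fin d) (Fin d) ℂ)
    (hE : E.PosSemidef) (hE' : (1 - E).PosSemidef) :
    ((p : ℂ) * (star ψ ⬝ᵥ ((∑ k, (star (b k) ⬝ᵥ (E *ᵥ b k)) • vecMulVec (b k) (star (b k))) *ᵥ ψ))
      + ((1 : ℂ) - p) * (star ψ ⬝ᵥ ((1 - E) *ᵥ ψ))).re < 1 := by
  have hreliability : (p : ℂ) * (star ψ ⬝ᵥ (dephasing b E *ᵥ ψ))
      + (1 - p) * (1 - star ψ ⬝ᵥ (E *ᵥ ψ)) < 1 :=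
    mul_add_one_sub_mul_one_sub_lt_one (by exact_mod_cast hp0) (by exact_mod_cast hp1)
      (dotProduct_dephasing_mulVec_le_one hb hψ hE') (hE.dotProduct_mulVec_nonneg ψ)
      fun hB => dotProduct_dephasing_mulVec_lt_one hb hψ hE.isHermitian hE'
        ((hE.dotProduct_mulVec_zero_iff ψ).mp hB)
  rw [sub_mulVec, one_mulVec, dotProduct_sub, hψ]
  exact (Complex.lt_def.mp hreliability).1

/-- imperfect reliability for detecting collapse, known ψ. -/
theorem stmt_0 (d : ℕ) (hd : 2 ≤ d)
    (b : Fin d → (Fin d → ℂ))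
    (hb : ∀ i j, star (b i) ⬝ᵥ b j = if i = j then 1 else 0)
    (ψ : Fin d → ℂ) (hψ : star ψ ⬝ᵥ ψ = 1)
    (p : ℝ) (hp0 : 0 < p) (hp1 : p < 1)
    (E : Matrix (Fin d) (Fin d) ℂ)
    (hE : E.PosSemidef) (hE' : (1 - E).PosSemidef) :
    ((p : ℂ) * (star ψ ⬝ᵥ ((∑ k, (star (b k) ⬝ᵥ (E *ᵥ b k)) • vecMulVec (b k) (star (b k))) *ᵥ ψ))
      + ((1 : ℂ) - p) * (star ψ ⬝ᵥ ((1 - E) *ᵥ ψ))).re < 1 :=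
  stmt_0_general d b hb ψ hψ p hp0 hp1 E hE hE'
end

section
/- (Helstrom's theorem, value) For density matrices ρ₁, ρ₂ on a finite-dimensional Hilbert space and 0 ≤ p ≤ 1, the maximum over all operators 0 ≤ E ≤ I of R(E) = p·tr(ρ₁E) + (1−p)·tr(ρ₂(I−E)) equals (1−p) + λ⁺, where λ⁺ is the sum of the positive eigenvalues (with multiplicity) of A = pρ₁ − (1−p)ρ₂. -/
open Matrix
open scoped ComplexOrder

/-! Since `tr ρ₂ = 1`, the reliability is `R(E) = (1 - p) + Re tr(A E)`, so one maximizes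
`Re tr(A E)` over effects `0 ≤ E ≤ 1`. Conjugation by a unitary permutes effects, so by the
spectral theorem `A` may be taken diagonal with entries `λᵢ`. Then `Re tr(A E) = ∑ λᵢ Re Eᵢᵢ`
with `0 ≤ Re Eᵢᵢ ≤ 1`, which is at most `λ⁺`, with equality for the projection onto the
eigenvectors of positive eigenvalue. -/

theorem Finset.sum_mul_le_sum_filter_pos {ι α : Type*} [Ring α] [LinearOrder α]
    [IsStrictOrderedRing α] (s : Finset ι) (l x : ι → α) (hx₀ : ∀ i, 0 ≤ x i)
    (hx₁ : ∀ i, x i ≤ 1) : ∑ i ∈ s, l i * x i ≤ ∑ i ∈ s with 0 < l i, l i := by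
  rw [Finset.sum_filter]
  refine Finset.sum_le_sum fun i _ => ?_
  split_ifs with h
  · exact mul_le_of_le_one_right h.le (hx₁ i)
  · exact mul_nonpos_of_nonpos_of_nonneg (not_lt.mp h) (hx₀ i)

namespace Matrix

theorem trace_mul_add_trace_mul_one_sub {n R : Type*} [Fintype n] [DecidableEq n]
    [CommRing R] (a b : R) (X Y E : Matrix n n R) :
    a * (X * E).trace + b * (Y * (1 - E)).trace = b * Y.trace + ((a • X - b • Y) * E).trace := by
  simp only [Matrix.mul_sub, Matrix.sub_mul, Matrix.mul_one, smul_mul, trace_sub, trace_smul,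
    smul_eq_mul]
  ring

variable {n 𝕜 : Type*} [Fintype n] [DecidableEq n] [RCLike 𝕜]

def effectValues (A : Matrix n n 𝕜) : Set ℝ :=
  {r | ∃ E : Matrix n n 𝕜, E.PosSemidef ∧ (1 - E).PosSemidef ∧ r = RCLike.re (A * E).trace}

theorem effectValues_conj_subset {U : Matrix n n 𝕜} (hU : star U * U = 1) (A : Matrix n n 𝕜) :
    effectValues (U * A * star U) ⊆ effectValues A := by
  rintro r ⟨E, hE, hE', rfl⟩
  refine ⟨star U * E * U, hE.conjTranspose_mul_mul_same U, ?_, ?_⟩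
  · have : 1 - star U * E * U = star U * (1 - E) * U := by
      rw [Matrix.mul_sub, Matrix.sub_mul, Matrix.mul_one, hU]
    rw [this]
    exact hE'.conjTranspose_mul_mul_same U
  · rw [Matrix.mul_assoc, Matrix.mul_assoc, trace_mul_comm, Matrix.mul_assoc]

theorem effectValues_conjStarAlgAut (U : unitary (Matrix n n 𝕜)) (A : Matrix n n 𝕜) :
    effectValues (Unitary.conjStarAlgAut 𝕜 _ U A) = effectValues A := by
  refine (effectValues_conj_subset (Unitary.coe_star_mul_self U) A).antisymm ?_
  have h : effectValues (Unitary.conjStarAlgAut 𝕜 _ (star U) (Unitary.conjStarAlgAut 𝕜 _ U A)) ⊆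
      effectValues (Unitary.conjStarAlgAut 𝕜 _ U A) :=
    effectValues_conj_subset (Unitary.coe_star_mul_self (star U)) _
  rwa [← Unitary.conjStarAlgAut_symm, StarAlgEquiv.symm_apply_apply] at h

theorem isGreatest_effectValues_diagonal (l : n → ℝ) :
    IsGreatest (effectValues (diagonal (RCLike.ofReal ∘ l) : Matrix n n 𝕜))
      (∑ i with 0 < l i, l i) := by
  have re_trace (E : Matrix n n 𝕜) :
      RCLike.re (diagonal (RCLike.ofReal ∘ l) * E).trace = ∑ i, l i * RCLike.re (E i i) := by
    simp [trace, diagonal_mul]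
  constructor
  · refine ⟨diagonal fun i => if 0 < l i then 1 else 0, ?_, ?_, ?_⟩
    · exact posSemidef_diagonal_iff.mpr fun i => by split_ifs <;> simp
    · rw [← diagonal_one, diagonal_sub]
      exact posSemidef_diagonal_iff.mpr fun i => by split_ifs <;> simp
    · rw [re_trace, Finset.sum_filter]
      congr 1 with i
      split_ifs with h <;> simp [h]
  · rintro r ⟨E, hE, hE', rfl⟩
    rw [re_trace]
    refine Finset.sum_mul_le_sum_filter_pos _ _ _ (fun i => ?_) (fun i => ?_)
    · exact (RCLike.nonneg_iff.mp hE.diag_nonneg).1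
    · simpa using (RCLike.nonneg_iff.mp (hE'.diag_nonneg (i := i))).1

theorem IsHermitian.isGreatest_effectValues {A : Matrix n n 𝕜} (hA : A.IsHermitian) :
    IsGreatest (effectValues A) (∑ i with 0 < hA.eigenvalues i, hA.eigenvalues i) := by
  have h := effectValues_conjStarAlgAut hA.eigenvectorUnitary
    (diagonal (RCLike.ofReal ∘ hA.eigenvalues))
  rw [← hA.spectral_theorem] at h
  rw [h]
  exact isGreatest_effectValues_diagonal _

end Matrix

theorem stmt_1_general (d : ℕ) (ρ₁ ρ₂ : Matrix (Fin d) (Fin d) ℂ)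
    (hρ₂t : ρ₂.trace = 1)
    (p : ℝ)
    (hA : ((p : ℂ) • ρ₁ - ((1 : ℂ) - (p : ℂ)) • ρ₂).IsHermitian) :
    IsGreatest
      {r : ℝ | ∃ E : Matrix (Fin d) (Fin d) ℂ, E.PosSemidef ∧ (1 - E).PosSemidef ∧
        r = ((p : ℂ) * (ρ₁ * E).trace + ((1 : ℂ) - (p : ℂ)) * (ρ₂ * (1 - E)).trace).re}
      ((1 - p) + ∑ i ∈ Finset.univ.filter (fun i => 0 < hA.eigenvalues i), hA.eigenvalues i) := by
  have hR (E : Matrix (Fin d) (Fin d) ℂ) :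
      ((p : ℂ) * (ρ₁ * E).trace + ((1 : ℂ) - (p : ℂ)) * (ρ₂ * (1 - E)).trace).re =
        1 - p + RCLike.re (((p : ℂ) • ρ₁ - ((1 : ℂ) - (p : ℂ)) • ρ₂) * E).trace := by
    simp [trace_mul_add_trace_mul_one_sub, hρ₂t]
  obtain ⟨⟨E₀, hE₀, hE₀', hE₀_val⟩, hle⟩ := hA.isGreatest_effectValues
  refine ⟨⟨E₀, hE₀, hE₀', by rw [hR, ← hE₀_val]⟩, ?_⟩
  rintro r ⟨E, hE, hE', rfl⟩
  rw [hR]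
  linarith [hle ⟨E, hE, hE', rfl⟩]

/-- Helstrom's theorem, value of the maximal reliability. -/
theorem stmt_1 (d : ℕ) (ρ₁ ρ₂ : Matrix (Fin d) (Fin d) ℂ)
    (hρ₁ : ρ₁.PosSemidef) (hρ₂ : ρ₂.PosSemidef)
    (hρ₁t : ρ₁.trace = 1) (hρ₂t : ρ₂.trace = 1)
    (p : ℝ) (hp0 : 0 ≤ p) (hp1 : p ≤ 1)
    (hA : ((p : ℂ) • ρ₁ - ((1 : ℂ) - (p : ℂ)) • ρ₂).IsHermitian) :
    IsGreatest
      {r : ℝ | ∃ E : Matrix (Fin d) (Fin d) ℂ, E.PosSemidef ∧ (1 - E).PosSemidef ∧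
        r = ((p : ℂ) * (ρ₁ * E).trace + ((1 : ℂ) - (p : ℂ)) * (ρ₂ * (1 - E)).trace).re}
      ((1 - p) + ∑ i ∈ Finset.univ.filter (fun i => 0 < hA.eigenvalues i), hA.eigenvalues i) :=
  stmt_1_general d ρ₁ ρ₂ hρ₂t p hA
end

section
/- (Helstrom's theorem, optimizers) For A = pρ₁ − (1−p)ρ₂ with ρ₁, ρ₂ density matrices, an operator 0 ≤ E ≤ I maximizes p·tr(ρ₁E) + (1−p)·tr(ρ₂(I−E)) if and only if P⁺ ≤ E ≤ P⁺ + P⁰, where P⁺ is the spectral projection of A onto its positive eigenspaces and P⁰ the projection onto ker A. -/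
/-!
Diagonalize `A = U diag(λ) U*`. The reliability of `F` is `re tr(A F)` plus the constant
`(1 - p) tr ρ₂`, and `re tr(A F) = ∑ λᵢ Gᵢᵢ` for `G = U* F U`, where `0 ≤ Gᵢᵢ ≤ 1` because
`0 ≤ G ≤ 1`. So the reliability is at most `∑ max(λᵢ, 0)`, this bound is attained at `P⁺`, and `E`
attains it iff `Gᵢᵢ = 1` where `λᵢ > 0` and `Gᵢᵢ = 0` where `λᵢ < 0`.

A positive semidefinite matrix with a zero diagonal entry has the whole column zero, so these
diagonal conditions say `G P = P` and `(1 - G) N = N` for the diagonal projections `P`, `N` onto the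
positive and negative eigenvalues. For `0 ≤ a` and a projection `p`, `a p = p` forces `p ≤ a`
because `a - p = (1 - p) a (1 - p)`; hence `P ≤ G ≤ 1 - N = P + P⁰`. Conversely, these two
inequalities give back the diagonal conditions entry by entry.
-/

open Matrix
open scoped ComplexOrder MatrixOrder

theorem IsStarProjection.le_of_mul_eq_self {R : Type*} [Ring R] [PartialOrder R] [StarRing R]
    [StarOrderedRing R] {a p : R} (hp : IsStarProjection p) (ha : 0 ≤ a) (hap : a * p = p) :
    p ≤ a := by
  have hpa : p * a = p := by
    simpa [(IsSelfAdjoint.of_nonneg ha).star_eq, hp.isSelfAdjoint.star_eq] using congr(star $hap)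
  have hconj : a - p = star (1 - p) * a * (1 - p) := by
    simp only [star_sub, star_one, hp.isSelfAdjoint.star_eq, sub_mul, mul_sub, one_mul, mul_one,
      hap, hpa, hp.isIdempotentElem.eq]
    abel
  exact sub_nonneg.mp (hconj ▸ star_left_conjugate_nonneg ha _)

theorem mul_le_max_zero {l x : ℝ} (hx : x ∈ Set.Icc (0 : ℝ) 1) : l * x ≤ max l 0 := by
  rcases le_or_gt l 0 with hl | hl
  · exact (mul_nonpos_of_nonpos_of_nonneg hl hx.1).trans (le_max_right _ _)
  · exact (mul_le_of_le_one_right hl.le hx.2).trans (le_max_left _ _)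

theorem mul_eq_max_zero_iff {l x : ℝ} :
    l * x = max l 0 ↔ (0 < l → x = 1) ∧ (l < 0 → x = 0) := by
  rcases lt_trichotomy l 0 with hl | rfl | hl
  · simp [max_eq_right hl.le, hl, hl.ne, not_lt_of_gt hl]
  · simp
  · simp [max_eq_left hl.le, hl, hl.ne', not_lt_of_gt hl]

namespace Matrix

variable {n 𝕜 : Type*} [DecidableEq n] [RCLike 𝕜]

theorem diag_mem_Icc {G : Matrix n n 𝕜} (hG0 : 0 ≤ G) (hG1 : G ≤ 1) (i : n) :
    ∃ x ∈ Set.Icc (0 : ℝ) 1, G i i = x := by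
  obtain ⟨x, hx0, hx⟩ := RCLike.nonneg_iff_exists_ofReal.mp (hG0.posSemidef.diag_nonneg (i := i))
  have h1 : 0 ≤ 1 - G i i := by simpa using (le_iff.mp hG1).diag_nonneg (i := i)
  refine ⟨x, ⟨hx0, ?_⟩, hx.symm⟩
  rw [← hx, sub_nonneg, ← RCLike.ofReal_one, RCLike.ofReal_le_ofReal] at h1
  exact h1

variable (μ : n → ℝ)

noncomputable def diagonalPosProj : Matrix n n 𝕜 := diagonal fun i => if 0 < μ i then 1 else 0

noncomputable def diagonalZeroProj : Matrix n n 𝕜 := diagonal fun i => if μ i = 0 then 1 else 0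

noncomputable def diagonalNegProj : Matrix n n 𝕜 := diagonal fun i => if μ i < 0 then 1 else 0

theorem diagonalPosProj_add_diagonalZeroProj :
    (diagonalPosProj μ + diagonalZeroProj μ : Matrix n n 𝕜) = 1 - diagonalNegProj μ := by
  rw [diagonalPosProj, diagonalZeroProj, diagonalNegProj, diagonal_add, ← diagonal_one,
    diagonal_sub]
  congr 1; ext i
  rcases lt_trichotomy (μ i) 0 with h | h | h
  · simp [h, h.ne, not_lt_of_gt h]
  · simp [h]
  · simp [h, h.ne', not_lt_of_gt h]

variable [Fintype n] {μ}

theorem PosSemidef.apply_eq_zero_of_diag_eq_zero {M : Matrix n n 𝕜} (hM : M.PosSemidef) {j : n}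
    (hj : M j j = 0) (i : n) : M i j = 0 := by
  have hcol : M *ᵥ Pi.single j 1 = 0 :=
    (hM.dotProduct_mulVec_zero_iff _).mp (by simp [hj])
  simpa using congrFun hcol i

theorem PosSemidef.mul_diagonal_eq_zero {M : Matrix n n 𝕜} (hM : M.PosSemidef) {d : n → 𝕜}
    (hd : ∀ i, d i ≠ 0 → M i i = 0) : M * diagonal d = 0 := by
  ext i j
  rw [mul_diagonal, zero_apply]
  by_cases hj : d j = 0
  · rw [hj, mul_zero]
  · rw [hM.apply_eq_zero_of_diag_eq_zero (hd j hj), zero_mul]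

theorem isStarProjection_diagonal_ite (q : n → Prop) [DecidablePred q] :
    IsStarProjection (diagonal fun i => if q i then (1 : 𝕜) else 0) := by
  refine ⟨?_, ?_⟩
  · rw [IsIdempotentElem, diagonal_mul_diagonal]
    congr 1; ext i; split_ifs <;> simp
  · rw [IsSelfAdjoint, star_eq_conjTranspose, diagonal_conjTranspose]
    congr 1; ext i; by_cases h : q i <;> simp [h]

theorem re_trace_diagonal_mul (μ : n → ℝ) (G : Matrix n n 𝕜) :
    RCLike.re (diagonal (RCLike.ofReal ∘ μ) * G).trace = ∑ i, μ i * RCLike.re (G i i) := by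
  simp [trace, diagonal_mul]

theorem re_trace_diagonal_mul_le {G : Matrix n n 𝕜} (hG0 : 0 ≤ G) (hG1 : G ≤ 1) :
    RCLike.re (diagonal (RCLike.ofReal ∘ μ) * G).trace ≤ ∑ i, max (μ i) 0 := by
  rw [re_trace_diagonal_mul]
  refine Finset.sum_le_sum fun i _ => ?_
  obtain ⟨x, hx, hGx⟩ := diag_mem_Icc hG0 hG1 i
  simpa [hGx] using mul_le_max_zero hx

theorem re_trace_diagonal_mul_eq_iff {G : Matrix n n 𝕜} (hG0 : 0 ≤ G) (hG1 : G ≤ 1) :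
    RCLike.re (diagonal (RCLike.ofReal ∘ μ) * G).trace = ∑ i, max (μ i) 0 ↔
      ∀ i, (0 < μ i → G i i = 1) ∧ (μ i < 0 → G i i = 0) := by
  rw [re_trace_diagonal_mul, Finset.sum_eq_sum_iff_of_le]
  · refine forall_congr' fun i => ?_
    obtain ⟨x, hx, hGx⟩ := diag_mem_Icc hG0 hG1 i
    simpa [hGx] using mul_eq_max_zero_iff (x := x)
  · intro i _
    obtain ⟨x, hx, hGx⟩ := diag_mem_Icc hG0 hG1 i
    simpa [hGx] using mul_le_max_zero hx

theorem diagonalPosProj_le_and_le_iff {G : Matrix n n 𝕜} (hG0 : 0 ≤ G) (hG1 : G ≤ 1) :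
    diagonalPosProj μ ≤ G ∧ G ≤ diagonalPosProj μ + diagonalZeroProj μ ↔
      ∀ i, (0 < μ i → G i i = 1) ∧ (μ i < 0 → G i i = 0) := by
  rw [diagonalPosProj_add_diagonalZeroProj, le_sub_comm]
  constructor
  · rintro ⟨hpos, hneg⟩ i
    obtain ⟨x, hx, hGx⟩ := diag_mem_Icc hG0 hG1 i
    have hpos_i := (le_iff.mp hpos).diag_nonneg (i := i)
    have hneg_i := (le_iff.mp hneg).diag_nonneg (i := i)
    simp only [diagonalPosProj, diagonalNegProj, sub_apply, one_apply_eq, diagonal_apply_eq,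
      hGx] at hpos_i hneg_i
    constructor
    · intro hi
      simp only [hi, if_true, sub_nonneg] at hpos_i
      rw [hGx]; exact_mod_cast le_antisymm hx.2 (by exact_mod_cast hpos_i)
    · intro hi
      simp only [hi, if_true, sub_sub_cancel_left, neg_nonneg] at hneg_i
      rw [hGx]; exact_mod_cast le_antisymm (by exact_mod_cast hneg_i) hx.1
  · intro h
    have hpos : (1 - G) * diagonalPosProj μ = 0 :=
      (le_iff.mp hG1).mul_diagonal_eq_zero fun i hi => by
        simp [(h i).1 (by by_contra h'; simp [h'] at hi)]
    have hneg : G * diagonalNegProj μ = 0 :=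
      hG0.posSemidef.mul_diagonal_eq_zero fun i hi => (h i).2 (by by_contra h'; simp [h'] at hi)
    refine ⟨(isStarProjection_diagonal_ite _).le_of_mul_eq_self hG0 ?_,
      (isStarProjection_diagonal_ite _).le_of_mul_eq_self (sub_nonneg.mpr hG1) ?_⟩
    · rwa [sub_mul, one_mul, sub_eq_zero, eq_comm] at hpos
    · rw [sub_mul, one_mul, hneg, sub_zero]

theorem forall_re_trace_diagonal_mul_le_iff {G : Matrix n n 𝕜} (hG0 : 0 ≤ G) (hG1 : G ≤ 1) :
    (∀ F : Matrix n n 𝕜, 0 ≤ F → F ≤ 1 →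
        RCLike.re (diagonal (RCLike.ofReal ∘ μ) * F).trace ≤
          RCLike.re (diagonal (RCLike.ofReal ∘ μ) * G).trace) ↔
      diagonalPosProj μ ≤ G ∧ G ≤ diagonalPosProj μ + diagonalZeroProj μ := by
  have hP : IsStarProjection (diagonalPosProj μ : Matrix n n 𝕜) := isStarProjection_diagonal_ite _
  have hZ : IsStarProjection (diagonalZeroProj μ : Matrix n n 𝕜) := isStarProjection_diagonal_ite _
  have hP_max :
      RCLike.re (diagonal (RCLike.ofReal ∘ μ) * (diagonalPosProj μ : Matrix n n 𝕜)).trace =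
        ∑ i, max (μ i) 0 :=
    (re_trace_diagonal_mul_eq_iff hP.nonneg hP.le_one).mpr
      ((diagonalPosProj_le_and_le_iff hP.nonneg hP.le_one).mp
        ⟨le_rfl, le_add_of_nonneg_right hZ.nonneg⟩)
  rw [diagonalPosProj_le_and_le_iff hG0 hG1, ← re_trace_diagonal_mul_eq_iff hG0 hG1]
  refine ⟨fun h => le_antisymm (re_trace_diagonal_mul_le hG0 hG1) ?_, fun h F hF0 hF1 => ?_⟩
  · exact hP_max ▸ h _ hP.nonneg hP.le_one
  · exact h ▸ re_trace_diagonal_mul_le hF0 hF1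

theorem trace_conjStarAlgAut (u : unitary (Matrix n n 𝕜)) (X : Matrix n n 𝕜) :
    (Unitary.conjStarAlgAut 𝕜 _ u X).trace = X.trace := by
  rw [Unitary.conjStarAlgAut_apply, trace_mul_cycle, Unitary.coe_star_mul_self, one_mul]

namespace IsHermitian

variable {A : Matrix n n 𝕜} (hA : A.IsHermitian)

noncomputable def posProj : Matrix n n 𝕜 :=
  Unitary.conjStarAlgAut 𝕜 _ hA.eigenvectorUnitary (diagonalPosProj hA.eigenvalues)

noncomputable def kerProj : Matrix n n 𝕜 :=
  Unitary.conjStarAlgAut 𝕜 _ hA.eigenvectorUnitary (diagonalZeroProj hA.eigenvalues)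

theorem forall_re_trace_mul_le_iff {E : Matrix n n 𝕜} (hE0 : 0 ≤ E) (hE1 : E ≤ 1) :
    (∀ F : Matrix n n 𝕜, 0 ≤ F → F ≤ 1 →
        RCLike.re (A * F).trace ≤ RCLike.re (A * E).trace) ↔
      hA.posProj ≤ E ∧ E ≤ hA.posProj + hA.kerProj := by
  set φ := Unitary.conjStarAlgAut 𝕜 (Matrix n n 𝕜) hA.eigenvectorUnitary
  have htrace (F : Matrix n n 𝕜) :
      (A * φ F).trace = (diagonal (RCLike.ofReal ∘ hA.eigenvalues) * F).trace := by
    conv_lhs => rw [hA.spectral_theorem]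
    rw [← map_mul, trace_conjStarAlgAut]
  have hnonneg (X : Matrix n n 𝕜) : 0 ≤ φ X ↔ 0 ≤ X := by
    simpa only [map_zero] using map_le_map_iff φ (a := 0) (b := X)
  have hle_one (X : Matrix n n 𝕜) : φ X ≤ 1 ↔ X ≤ 1 := by
    simpa only [map_one] using map_le_map_iff φ (a := X) (b := 1)
  obtain ⟨G, rfl⟩ : ∃ G, φ G = E := ⟨φ.symm E, φ.apply_symm_apply E⟩
  rw [hnonneg] at hE0
  rw [hle_one] at hE1
  rw [(EquivLike.surjective φ).forall]
  simp only [htrace, hnonneg, hle_one]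
  rw [posProj, kerProj, ← map_add, map_le_map_iff, map_le_map_iff]
  exact forall_re_trace_diagonal_mul_le_iff hE0 hE1

end IsHermitian

end Matrix

theorem reliability_eq_trace_mul_add {n 𝕜 : Type*} [Fintype n] [DecidableEq n] [RCLike 𝕜]
    (p : 𝕜) (ρ₁ ρ₂ F : Matrix n n 𝕜) :
    p * (ρ₁ * F).trace + (1 - p) * (ρ₂ * (1 - F)).trace =
      ((p • ρ₁ - (1 - p) • ρ₂) * F).trace + (1 - p) * ρ₂.trace := by
  simp only [sub_mul, smul_mul, mul_sub, mul_one, trace_sub, trace_smul, smul_eq_mul]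
  ring

theorem stmt_2_general (d : ℕ) (ρ₁ ρ₂ : Matrix (Fin d) (Fin d) ℂ)
    (p : ℝ)
    (hA : ((p : ℂ) • ρ₁ - ((1 : ℂ) - (p : ℂ)) • ρ₂).IsHermitian)
    (Pplus P0 : Matrix (Fin d) (Fin d) ℂ)
    (hPplus : Pplus = (hA.eigenvectorUnitary : Matrix (Fin d) (Fin d) ℂ) *
      Matrix.diagonal (fun i => if 0 < hA.eigenvalues i then (1 : ℂ) else 0) *
      star (hA.eigenvectorUnitary : Matrix (Fin d) (Fin d) ℂ))
    (hP0 : P0 = (hA.eigenvectorUnitary : Matrix (Fin d) (Fin d) ℂ) *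
      Matrix.diagonal (fun i => if hA.eigenvalues i = 0 then (1 : ℂ) else 0) *
      star (hA.eigenvectorUnitary : Matrix (Fin d) (Fin d) ℂ))
    (E : Matrix (Fin d) (Fin d) ℂ) (hE : E.PosSemidef) (hE' : (1 - E).PosSemidef) :
    (∀ F : Matrix (Fin d) (Fin d) ℂ, F.PosSemidef → (1 - F).PosSemidef →
        ((p : ℂ) * (ρ₁ * F).trace + ((1 : ℂ) - (p : ℂ)) * (ρ₂ * (1 - F)).trace).re ≤
        ((p : ℂ) * (ρ₁ * E).trace + ((1 : ℂ) - (p : ℂ)) * (ρ₂ * (1 - E)).trace).re)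
      ↔ ((E - Pplus).PosSemidef ∧ (Pplus + P0 - E).PosSemidef) := by
  have hPplus' : Pplus = hA.posProj := hPplus
  have hP0' : P0 = hA.kerProj := hP0
  subst hPplus' hP0'
  simp only [reliability_eq_trace_mul_add, Complex.add_re, add_le_add_iff_right]
  simpa only [le_iff, sub_zero, RCLike.re_to_complex] using
    hA.forall_re_trace_mul_le_iff hE.nonneg hE'

/-- Helstrom's theorem, characterization of the optimizers. -/
theorem stmt_2 (d : ℕ) (ρ₁ ρ₂ : Matrix (Fin d) (Fin d) ℂ)
    (hρ₁ : ρ₁.PosSemidef) (hρ₂ : ρ₂.PosSemidef)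
    (hρ₁t : ρ₁.trace = 1) (hρ₂t : ρ₂.trace = 1)
    (p : ℝ) (hp0 : 0 ≤ p) (hp1 : p ≤ 1)
    (hA : ((p : ℂ) • ρ₁ - ((1 : ℂ) - (p : ℂ)) • ρ₂).IsHermitian)
    (Pplus P0 : Matrix (Fin d) (Fin d) ℂ)
    (hPplus : Pplus = (hA.eigenvectorUnitary : Matrix (Fin d) (Fin d) ℂ) *
      Matrix.diagonal (fun i => if 0 < hA.eigenvalues i then (1 : ℂ) else 0) *
      star (hA.eigenvectorUnitary : Matrix (Fin d) (Fin d) ℂ))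
    (hP0 : P0 = (hA.eigenvectorUnitary : Matrix (Fin d) (Fin d) ℂ) *
      Matrix.diagonal (fun i => if hA.eigenvalues i = 0 then (1 : ℂ) else 0) *
      star (hA.eigenvectorUnitary : Matrix (Fin d) (Fin d) ℂ))
    (E : Matrix (Fin d) (Fin d) ℂ) (hE : E.PosSemidef) (hE' : (1 - E).PosSemidef) :
    (∀ F : Matrix (Fin d) (Fin d) ℂ, F.PosSemidef → (1 - F).PosSemidef →
        ((p : ℂ) * (ρ₁ * F).trace + ((1 : ℂ) - (p : ℂ)) * (ρ₂ * (1 - F)).trace).re ≤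
        ((p : ℂ) * (ρ₁ * E).trace + ((1 : ℂ) - (p : ℂ)) * (ρ₂ * (1 - E)).trace).re)
      ↔ ((E - Pplus).PosSemidef ∧ (Pplus + P0 - E).PosSemidef) :=
  stmt_2_general d ρ₁ ρ₂ p hA Pplus P0 hPplus hP0 E hE hE'
end

section
/- Let ψ be a unit vector in a d-dimensional Hilbert space with ⟨b_k|ψ⟩ ≠ 0 for all k, 0 < p < 1, and A = p·diag|ψ⟩⟨ψ| − (1−p)|ψ⟩⟨ψ|. A real number α ≤ 0 is an eigenvalue of A if and only if f_ψ(−α/p) = p/(1−p), where f_ψ(z) = ∑_k |ψ_k|²/(z+|ψ_k|²). Consequently, A has exactly one non-positive eigenvalue when p ≤ d/(d+1) (which is simple, zero iff p = d/(d+1)), and no non-positive eigenvalue when p > d/(d+1). -/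
/-!
For `α ≤ 0` the diagonal operator `p · diag |ψ⟩⟨ψ| - α` is invertible, so `A φ = α φ` forces
`φ = (1 - p) ⟨ψ, φ⟩ (p · diag |ψ⟩⟨ψ| - α)⁻¹ ψ`. Hence every such eigenvector is a multiple of the
resolvent vector `(p · diag |ψ⟩⟨ψ| - α)⁻¹ ψ`, which is itself one exactly when
`(1 - p) ⟨ψ, (p · diag |ψ⟩⟨ψ| - α)⁻¹ ψ⟩ = 1`, i.e. `f_ψ(-α/p) = p/(1-p)`.
On `[0, ∞)` the function `f_ψ` is continuous and strictly decreasing, with `f_ψ 0 = d` and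
`f_ψ z < 1/z`, so this equation has a root `z ≥ 0`, necessarily unique, exactly when
`p/(1-p) ≤ d`, i.e. `p ≤ d/(d+1)`; the root is `0` exactly when `p/(1-p) = d`.
-/

open Matrix

def HasEigen {d : ℕ} (A : Matrix (Fin d) (Fin d) ℂ) (α : ℝ) : Prop :=
  ∃ φ : Fin d → ℂ, φ ≠ 0 ∧ A *ᵥ φ = (α : ℂ) • φ

section SecularFunction

variable {ι : Type*} [Fintype ι]

noncomputable def secularFun (w : ι → ℝ) (z : ℝ) : ℝ :=
  ∑ k, w k / (z + w k)

variable {w : ι → ℝ}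

theorem secularFun_zero (hw : ∀ k, w k ≠ 0) : secularFun w 0 = Fintype.card ι := by
  simp [secularFun, hw]

theorem secularFun_strictAntiOn [Nonempty ι] (hw : ∀ k, 0 < w k) :
    StrictAntiOn (secularFun w) (Set.Ici 0) := fun x hx _ _ hxy =>
  Finset.sum_lt_sum_of_nonempty Finset.univ_nonempty fun k _ =>
    div_lt_div_of_pos_left (hw k) (by linarith [hw k, hx.out]) (by linarith)

theorem continuousOn_secularFun (hw : ∀ k, 0 < w k) :
    ContinuousOn (secularFun w) (Set.Ici 0) :=
  continuousOn_finsetSum _ fun k _ =>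
    continuousOn_const.div (continuousOn_id.add continuousOn_const) fun _ hz =>
      (add_pos_of_nonneg_of_pos hz.out (hw k)).ne'

theorem secularFun_lt_sum_div [Nonempty ι] (hw : ∀ k, 0 < w k) {z : ℝ} (hz : 0 < z) :
    secularFun w z < (∑ k, w k) / z := by
  rw [Finset.sum_div]
  exact Finset.sum_lt_sum_of_nonempty Finset.univ_nonempty fun k _ =>
    div_lt_div_of_pos_left (hw k) hz (by linarith [hw k])

theorem exists_secularFun_eq [Nonempty ι] (hw : ∀ k, 0 < w k) {c : ℝ} (hc0 : 0 < c)
    (hc : c ≤ Fintype.card ι) : ∃ z, 0 ≤ z ∧ secularFun w z = c := by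
  have hsum : 0 < ∑ k, w k := Finset.sum_pos (fun k _ => hw k) Finset.univ_nonempty
  set Z := (∑ k, w k) / c
  have hZ : 0 < Z := div_pos hsum hc0
  have hlt : secularFun w Z < c := by
    simpa [Z, div_div_cancel₀ hsum.ne'] using secularFun_lt_sum_div hw hZ
  have hc' : c ∈ Set.Icc (secularFun w Z) (secularFun w 0) :=
    ⟨hlt.le, (secularFun_zero fun k => (hw k).ne') ▸ hc⟩
  obtain ⟨z, hz, hzc⟩ := intermediate_value_Icc' hZ.le
    ((continuousOn_secularFun hw).mono Set.Icc_subset_Ici_self) hc'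
  exact ⟨z, hz.1, hzc⟩

theorem sum_div_mul_sub_eq_secularFun_div {p : ℝ} (hp : p ≠ 0) (α : ℝ) :
    ∑ k, w k / (p * w k - α) = secularFun w (-α / p) / p := by
  rw [secularFun, Finset.sum_div]
  refine Finset.sum_congr rfl fun k _ => ?_
  rw [div_div, mul_comm _ p, mul_add, mul_div_cancel₀ _ hp]
  ring_nf

end SecularFunction

section DiagSubProj

variable {ι : Type*} [Fintype ι] (p : ℝ) (ψ : ι → ℂ)

noncomputable def resolventVec (α : ℝ) : ι → ℂ :=
  fun k => ψ k / ((p * ‖ψ k‖ ^ 2 - α : ℝ) : ℂ)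

theorem star_dotProduct_resolventVec (α : ℝ) :
    star ψ ⬝ᵥ resolventVec p ψ α = ((∑ k, ‖ψ k‖ ^ 2 / (p * ‖ψ k‖ ^ 2 - α) : ℝ) : ℂ) := by
  simp only [dotProduct, resolventVec, Pi.star_apply, Complex.ofReal_sum, Complex.ofReal_div,
    Complex.ofReal_pow]
  refine Finset.sum_congr rfl fun k _ => ?_
  rw [mul_div_assoc', mul_comm, show star (ψ k) = (starRingEnd ℂ) (ψ k) from rfl,
    Complex.mul_conj']

variable [DecidableEq ι]

noncomputable def diagSubProj : Matrix ι ι ℂ :=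
  (p : ℂ) • diagonal (fun k => ψ k * star (ψ k)) - ((1 : ℂ) - (p : ℂ)) • vecMulVec ψ (star ψ)

theorem diagSubProj_mulVec_apply (φ : ι → ℂ) (k : ι) :
    (diagSubProj p ψ *ᵥ φ) k = p * ‖ψ k‖ ^ 2 * φ k - (1 - p) * (star ψ ⬝ᵥ φ) * ψ k := by
  simp only [diagSubProj, sub_mulVec, smul_mulVec, Pi.sub_apply, Pi.smul_apply, smul_eq_mul,
    mulVec_diagonal, vecMulVec_mulVec]
  rw [show star (ψ k) = (starRingEnd ℂ) (ψ k) from rfl, Complex.mul_conj']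
  simp only [MulOpposite.smul_eq_mul_unop, MulOpposite.unop_op]
  ring

variable {p ψ}

theorem diagSubProj_mulVec_eq_smul_iff {α : ℝ} (hα : ∀ k, p * ‖ψ k‖ ^ 2 - α ≠ 0)
    {φ : ι → ℂ} :
    diagSubProj p ψ *ᵥ φ = (α : ℂ) • φ ↔
      φ = ((1 - p) * (star ψ ⬝ᵥ φ)) • resolventVec p ψ α := by
  simp only [funext_iff, Pi.smul_apply, smul_eq_mul, diagSubProj_mulVec_apply, resolventVec]
  refine forall_congr' fun k => ?_
  rw [mul_div_assoc', eq_div_iff (Complex.ofReal_ne_zero.2 (hα k))]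
  push_cast
  constructor <;> intro h <;> linear_combination h

theorem exists_diagSubProj_mulVec_eq_smul_iff {α : ℝ} (hα : ∀ k, p * ‖ψ k‖ ^ 2 - α ≠ 0) :
    (∃ φ, φ ≠ 0 ∧ diagSubProj p ψ *ᵥ φ = (α : ℂ) • φ) ↔
      (1 - p) * ∑ k, ‖ψ k‖ ^ 2 / (p * ‖ψ k‖ ^ 2 - α) = 1 := by
  have hv := star_dotProduct_resolventVec p ψ α
  constructor
  · rintro ⟨φ, hφ0, hφ⟩
    rw [diagSubProj_mulVec_eq_smul_iff hα] at hφ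
    have hS : star ψ ⬝ᵥ φ ≠ 0 := fun h => hφ0 (by simpa [h] using hφ)
    have h := congrArg (star ψ ⬝ᵥ ·) hφ
    simp only [dotProduct_smul, smul_eq_mul] at h
    have hcoef : (1 - p) * (star ψ ⬝ᵥ resolventVec p ψ α) = 1 :=
      mul_left_cancel₀ hS (by linear_combination -h)
    rw [hv] at hcoef
    exact_mod_cast hcoef
  · intro h
    have hcoef : (1 - p) * (star ψ ⬝ᵥ resolventVec p ψ α) = 1 := by rw [hv]; exact_mod_cast h
    refine ⟨resolventVec p ψ α, fun hv0 => ?_,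
      (diagSubProj_mulVec_eq_smul_iff hα).2 (by rw [hcoef, one_smul])⟩
    simp [hv0] at hcoef

theorem eq_smul_of_diagSubProj_mulVec_eq_smul {α : ℝ} (hα : ∀ k, p * ‖ψ k‖ ^ 2 - α ≠ 0)
    {φ₁ φ₂ : ι → ℂ} (hφ₁0 : φ₁ ≠ 0) (hφ₁ : diagSubProj p ψ *ᵥ φ₁ = (α : ℂ) • φ₁)
    (hφ₂ : diagSubProj p ψ *ᵥ φ₂ = (α : ℂ) • φ₂) : ∃ c : ℂ, φ₂ = c • φ₁ := by
  rw [diagSubProj_mulVec_eq_smul_iff hα] at hφ₁ hφ₂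
  set c₁ := (1 - p) * (star ψ ⬝ᵥ φ₁)
  have hc₁ : c₁ ≠ 0 := fun h => hφ₁0 (by rw [hφ₁, h, zero_smul])
  refine ⟨((1 - p) * (star ψ ⬝ᵥ φ₂)) / c₁, ?_⟩
  rw [hφ₁, smul_smul, div_mul_cancel₀ _ hc₁, ← hφ₂]

end DiagSubProj

theorem mul_norm_sq_sub_ne_zero {p α : ℝ} (hp : 0 < p) (hα : α ≤ 0) {z : ℂ} (hz : z ≠ 0) :
    p * ‖z‖ ^ 2 - α ≠ 0 := by
  have := norm_pos_iff.2 hz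
  have : 0 < p * ‖z‖ ^ 2 := by positivity
  exact ne_of_gt (by linarith)

theorem hasEigen_diagSubProj_iff {d : ℕ} {p : ℝ} (hp0 : 0 < p) (hp1 : p < 1) {ψ : Fin d → ℂ}
    (hψ : ∀ k, ψ k ≠ 0) {α : ℝ} (hα : α ≤ 0) :
    HasEigen (diagSubProj p ψ) α ↔ secularFun (fun k => ‖ψ k‖ ^ 2) (-α / p) = p / (1 - p) := by
  rw [HasEigen,
    exists_diagSubProj_mulVec_eq_smul_iff fun k => mul_norm_sq_sub_ne_zero hp0 hα (hψ k),
    sum_div_mul_sub_eq_secularFun_div (w := fun k => ‖ψ k‖ ^ 2) hp0.ne', eq_div_iff (by linarith)]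
  constructor <;> intro h <;> field_simp at h ⊢ <;> linarith

theorem div_one_sub_le_iff {p x : ℝ} (hp : p < 1) (hx : 0 ≤ x) :
    p / (1 - p) ≤ x ↔ p ≤ x / (x + 1) := by
  rw [div_le_iff₀ (by linarith), le_div_iff₀ (by linarith)]
  constructor <;> intro h <;> linarith

theorem div_one_sub_eq_iff {p x : ℝ} (hp : p < 1) (hx : 0 ≤ x) :
    p / (1 - p) = x ↔ p = x / (x + 1) := by
  rw [div_eq_iff (by linarith), eq_div_iff (by linarith)]
  constructor <;> intro h <;> linarith

theorem stmt_6_general (d : ℕ) (ψ : Fin d → ℂ)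
    (hψ : ∑ k, ‖ψ k‖ ^ 2 = 1) (hψk : ∀ k, ψ k ≠ 0)
    (p : ℝ) (hp0 : 0 < p) (hp1 : p < 1)
    (A : Matrix (Fin d) (Fin d) ℂ)
    (hA : A = (p : ℂ) • Matrix.diagonal (fun k => ψ k * star (ψ k)) -
      ((1 : ℂ) - (p : ℂ)) • vecMulVec ψ (star ψ)) :
    (∀ α : ℝ, α ≤ 0 →
      (HasEigen A α ↔ ∑ k, ‖ψ k‖ ^ 2 / (-α / p + ‖ψ k‖ ^ 2) = p / (1 - p))) ∧
    (p ≤ d / (d + 1) →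
      ∃ α : ℝ, α ≤ 0 ∧ HasEigen A α ∧
        (∀ β : ℝ, β ≤ 0 → HasEigen A β → β = α) ∧
        (α = 0 ↔ p = d / (d + 1)) ∧
        (∀ φ₁ : Fin d → ℂ, φ₁ ≠ 0 → A *ᵥ φ₁ = (α : ℂ) • φ₁ →
          ∀ φ₂ : Fin d → ℂ, A *ᵥ φ₂ = (α : ℂ) • φ₂ → ∃ c : ℂ, φ₂ = c • φ₁)) ∧
    ((d : ℝ) / (d + 1) < p → ¬ ∃ α : ℝ, α ≤ 0 ∧ HasEigen A α) := by
  subst hA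
  have : Nonempty (Fin d) := by
    by_contra h
    simp [not_nonempty_iff.1 h] at hψ
  have hw : ∀ k, 0 < ‖ψ k‖ ^ 2 := fun k => pow_pos (norm_pos_iff.2 (hψk k)) 2
  have hf0 : secularFun (fun k => ‖ψ k‖ ^ 2) 0 = d := by
    rw [secularFun_zero fun k => (hw k).ne', Fintype.card_fin]
  have hanti := secularFun_strictAntiOn hw
  have hEig := fun α (hα : α ≤ 0) => hasEigen_diagSubProj_iff hp0 hp1 hψk hα
  have hIci : ∀ α : ℝ, α ≤ 0 → -α / p ∈ Set.Ici 0 := fun α hα => div_nonneg (by linarith) hp0.le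
  refine ⟨hEig, fun hp => ?_, fun hp ⟨α, hα, hαA⟩ => ?_⟩
  · obtain ⟨z, hz0, hzc⟩ :=
      exists_secularFun_eq hw (c := p / (1 - p)) (div_pos hp0 (by linarith))
        (by rwa [Fintype.card_fin, div_one_sub_le_iff hp1 d.cast_nonneg])
    have hαz : -(-(p * z)) / p = z := by field_simp
    have hα : -(p * z) ≤ 0 := by nlinarith
    refine ⟨-(p * z), hα, (hEig _ hα).2 (by rwa [hαz]), fun β hβ hβA => ?_, ?_,
      fun φ₁ h₁0 h₁ φ₂ h₂ => eq_smul_of_diagSubProj_mulVec_eq_smul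
        (fun k => mul_norm_sq_sub_ne_zero hp0 hα (hψk k)) h₁0 h₁ h₂⟩
    · have := hanti.injOn (hIci β hβ) hz0 (((hEig β hβ).1 hβA).trans hzc.symm)
      field_simp at this
      linarith
    · rw [neg_eq_zero, mul_eq_zero, or_iff_right hp0.ne',
        ← hanti.injOn.eq_iff hz0 Set.self_mem_Ici, hzc, hf0, div_one_sub_eq_iff hp1 d.cast_nonneg]
  · have hle := hanti.antitoneOn Set.self_mem_Ici (hIci α hα) (hIci α hα)
    rw [(hEig α hα).1 hαA, hf0, div_one_sub_le_iff hp1 d.cast_nonneg] at hle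
    linarith

/-- non-positive eigenvalues of A = p diag|ψ⟩⟨ψ| − (1−p)|ψ⟩⟨ψ|. -/
theorem stmt_6 (d : ℕ) (hd : 2 ≤ d) (ψ : Fin d → ℂ)
    (hψ : ∑ k, ‖ψ k‖ ^ 2 = 1) (hψk : ∀ k, ψ k ≠ 0)
    (p : ℝ) (hp0 : 0 < p) (hp1 : p < 1)
    (A : Matrix (Fin d) (Fin d) ℂ)
    (hA : A = (p : ℂ) • Matrix.diagonal (fun k => ψ k * star (ψ k)) -
      ((1 : ℂ) - (p : ℂ)) • vecMulVec ψ (star ψ)) :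
    (∀ α : ℝ, α ≤ 0 →
      (HasEigen A α ↔ ∑ k, ‖ψ k‖ ^ 2 / (-α / p + ‖ψ k‖ ^ 2) = p / (1 - p))) ∧
    (p ≤ d / (d + 1) →
      ∃ α : ℝ, α ≤ 0 ∧ HasEigen A α ∧
        (∀ β : ℝ, β ≤ 0 → HasEigen A β → β = α) ∧
        (α = 0 ↔ p = d / (d + 1)) ∧
        (∀ φ₁ : Fin d → ℂ, φ₁ ≠ 0 → A *ᵥ φ₁ = (α : ℂ) • φ₁ →
          ∀ φ₂ : Fin d → ℂ, A *ᵥ φ₂ = (α : ℂ) • φ₂ → ∃ c : ℂ, φ₂ = c • φ₁)) ∧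
    ((d : ℝ) / (d + 1) < p → ¬ ∃ α : ℝ, α ≤ 0 ∧ HasEigen A α) :=
  stmt_6_general d ψ hψ hψk p hp0 hp1 A hA
end

section
/- Let ψ be a unit vector in C^d with all components nonzero and p ≥ d/(d+1), p < 1. Then for every operator 0 ≤ E ≤ I, the reliability R_{ψ,p}(E) = p⟨ψ|diag E|ψ⟩ + (1−p)⟨ψ|(I−E)|ψ⟩ is at most p; i.e., no experiment is more reliable than blindly guessing that collapse occurred. -/
open Matrix
open scoped ComplexOrder

/-! Write `F = 1 - E ≥ 0` and `A = ⟨ψ|diag F|ψ⟩`, so that `⟨ψ|diag E|ψ⟩ = 1 - A`. Pinching gives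
`F ≤ d · diag F`, hence `⟨ψ|F|ψ⟩ ≤ d A`, and the reliability is at most
`p (1 - A) + (1 - p) d A ≤ p` exactly when `(1 - p) d ≤ p`, i.e. `p ≥ d / (d + 1)`. -/

theorem norm_sum_sq_le_card_mul {ι E : Type*} [SeminormedAddCommGroup E] (s : Finset ι)
    (v : ι → E) : ‖∑ i ∈ s, v i‖ ^ 2 ≤ s.card * ∑ i ∈ s, ‖v i‖ ^ 2 :=
  calc ‖∑ i ∈ s, v i‖ ^ 2 ≤ (∑ i ∈ s, ‖v i‖) ^ 2 := by gcongr; exact norm_sum_le s v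
    _ ≤ s.card * ∑ i ∈ s, ‖v i‖ ^ 2 := sq_sum_le_card_mul_sum_sq

theorem RCLike.re_star_mul_self_mul {𝕜 : Type*} [RCLike 𝕜] (a z : 𝕜) :
    RCLike.re (star a * a * z) = ‖a‖ ^ 2 * RCLike.re z := by
  rw [RCLike.star_def, RCLike.conj_mul, ← RCLike.ofReal_pow, RCLike.re_ofReal_mul]

namespace Matrix

variable {𝕜 n : Type*} [RCLike 𝕜] [Fintype n]

theorem re_dotProduct_diagonal_diag_mulVec [DecidableEq n] (M : Matrix n n 𝕜) (x : n → 𝕜) :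
    RCLike.re (star x ⬝ᵥ (diagonal (fun k => M k k) *ᵥ x)) =
      ∑ k, ‖x k‖ ^ 2 * RCLike.re (M k k) := by
  simp only [dotProduct, mulVec_diagonal, Pi.star_apply, map_sum]
  refine Finset.sum_congr rfl fun k _ => ?_
  rw [mul_comm (M k k), ← mul_assoc, RCLike.re_star_mul_self_mul]

/-- The pinching inequality `F ≤ (card n) • diag F`: since `x = ∑ k, x k • Pi.single k 1`, it is
the triangle and Cauchy–Schwarz inequalities for the seminorm `√(re xᴴ F x)`. -/
theorem PosSemidef.re_dotProduct_mulVec_le_card_mul [DecidableEq n] {F : Matrix n n 𝕜}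
    (hF : F.PosSemidef) (x : n → 𝕜) :
    RCLike.re (star x ⬝ᵥ (F *ᵥ x)) ≤ Fintype.card n * ∑ k, ‖x k‖ ^ 2 * RCLike.re (F k k) := by
  have hnorm (y : n → 𝕜) :
      @norm _ (F.toSeminormedAddCommGroup hF).toNorm y ^ 2 = RCLike.re (star y ⬝ᵥ (F *ᵥ y)) := by
    rw [@norm_sq_eq_re_inner 𝕜 _ _ (F.toSeminormedAddCommGroup hF) (F.toInnerProductSpace hF)]
    exact congrArg _ (dotProduct_comm _ _)
  have hsingle (k : n) : RCLike.re (star (x k • Pi.single k 1) ⬝ᵥ (F *ᵥ (x k • Pi.single k 1))) =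
      ‖x k‖ ^ 2 * RCLike.re (F k k) := by
    simp only [star_smul, Pi.star_single, star_one, mulVec_smul, mulVec_single_one,
      dotProduct_smul, smul_dotProduct, single_dotProduct, one_mul, smul_eq_mul, col_apply]
    rw [← mul_assoc, mul_comm (x k), RCLike.re_star_mul_self_mul]
  have h := @norm_sum_sq_le_card_mul _ _ (F.toSeminormedAddCommGroup hF) Finset.univ
    (fun k => x k • Pi.single k 1)
  rwa [← pi_eq_sum_univ' x, hnorm, Finset.card_univ, Finset.sum_congr rfl fun k _ => hnorm _,
    Finset.sum_congr rfl fun k _ => hsingle k] at h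

end Matrix

theorem stmt_8_general (d : ℕ) (ψ : Fin d → ℂ)
    (hψ : ∑ k, ‖ψ k‖ ^ 2 = 1)
    (p : ℝ) (hp0 : (d : ℝ) / (d + 1) ≤ p) (hp1 : p < 1)
    (E : Matrix (Fin d) (Fin d) ℂ) (hE' : (1 - E).PosSemidef) :
    ((p : ℂ) * (star ψ ⬝ᵥ (Matrix.diagonal (fun k => E k k) *ᵥ ψ)) +
      ((1 : ℂ) - (p : ℂ)) * (star ψ ⬝ᵥ ((1 - E) *ᵥ ψ))).re ≤ p := by
  set A := ∑ k, ‖ψ k‖ ^ 2 * ((1 - E) k k).re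
  have hA : 0 ≤ A := Finset.sum_nonneg fun k _ =>
    mul_nonneg (by positivity) (Complex.nonneg_iff.1 hE'.diag_nonneg).1
  have hdiag : (star ψ ⬝ᵥ (diagonal (fun k => E k k) *ᵥ ψ)).re = 1 - A := by
    rw [← RCLike.re_to_complex, re_dotProduct_diagonal_diag_mulVec]
    simp only [A, RCLike.re_to_complex, Matrix.sub_apply, one_apply_eq, Complex.sub_re,
      Complex.one_re, mul_sub, mul_one, Finset.sum_sub_distrib, hψ, sub_sub_cancel]
  have hpinch : (star ψ ⬝ᵥ ((1 - E) *ᵥ ψ)).re ≤ d * A := by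
    simpa only [RCLike.re_to_complex, Fintype.card_fin] using
      hE'.re_dotProduct_mulVec_le_card_mul ψ
  have hdp : (1 - p) * d ≤ p := by
    rw [div_le_iff₀ (by positivity)] at hp0
    linarith
  calc _ = p * (1 - A) + (1 - p) * (star ψ ⬝ᵥ ((1 - E) *ᵥ ψ)).re := by
        simp only [Complex.add_re, Complex.re_ofReal_mul, ← Complex.ofReal_one,
          ← Complex.ofReal_sub, hdiag]
    _ ≤ p * (1 - A) + (1 - p) * (d * A) := by gcongr
    _ ≤ p * (1 - A) + p * A := by rw [← mul_assoc]; gcongr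
    _ = p := by ring

/-- for p ≥ d/(d+1), no experiment beats blind guessing "collapse". -/
theorem stmt_8 (d : ℕ) (hd : 2 ≤ d) (ψ : Fin d → ℂ)
    (hψ : ∑ k, ‖ψ k‖ ^ 2 = 1) (hψk : ∀ k, ψ k ≠ 0)
    (p : ℝ) (hp0 : (d : ℝ) / (d + 1) ≤ p) (hp1 : p < 1)
    (E : Matrix (Fin d) (Fin d) ℂ) (hE : E.PosSemidef) (hE' : (1 - E).PosSemidef) :
    ((p : ℂ) * (star ψ ⬝ᵥ (Matrix.diagonal (fun k => E k k) *ᵥ ψ)) +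
      ((1 : ℂ) - (p : ℂ)) * (star ψ ⬝ᵥ ((1 - E) *ᵥ ψ))).re ≤ p :=
  stmt_8_general d ψ hψ p hp0 hp1 E hE'
end

section
/- For any unit vector ψ ∈ C^d and 0 < p < 1, the maximal reliability satisfies max(p, 1 − p∑_k|ψ_k|⁴) ≤ R_p^max(ψ) ≤ max(p, 1 − p/d), where R_p^max(ψ) is the supremum over 0 ≤ E ≤ I of p⟨ψ|diag E|ψ⟩ + (1−p)⟨ψ|(I−E)|ψ⟩. -/
open Matrix
open scoped ComplexOrder

/-!
The lower bounds are the values at `E = 1` (namely `p`) and at the projection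
`E = 1 - |ψ⟩⟨ψ|` (namely `1 - p ∑ |ψ_k|⁴`). For the upper bound put `s = ⟨ψ|(1 - E)|ψ⟩ ∈ [0, 1]`.
The pinching inequality `⟨ψ|A|ψ⟩ ≤ d ⟨ψ|diag A|ψ⟩` for `A ≥ 0`, which reduces to Cauchy–Schwarz
on rank-one matrices, applied to `A = 1 - E` gives `⟨ψ|diag E|ψ⟩ ≤ 1 - s / d`. Hence
`R(E) ≤ (1 - s) p + s (1 - p / d)`, a convex combination of `p` and `1 - p / d`.
-/

namespace Matrix

variable {n : Type*} [Fintype n]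

lemma norm_dotProduct_sq_le_card_mul (v ψ : n → ℂ) :
    ‖v ⬝ᵥ ψ‖ ^ 2 ≤ Fintype.card n * ∑ k, ‖ψ k‖ ^ 2 * ‖v k‖ ^ 2 := by
  calc ‖v ⬝ᵥ ψ‖ ^ 2 ≤ (∑ k, ‖v k‖ * ‖ψ k‖) ^ 2 := by
        gcongr
        exact (norm_sum_le _ _).trans_eq (by simp_rw [norm_mul])
    _ ≤ Fintype.card n * ∑ k, (‖v k‖ * ‖ψ k‖) ^ 2 := sq_sum_le_card_mul_sum_sq
    _ = Fintype.card n * ∑ k, ‖ψ k‖ ^ 2 * ‖v k‖ ^ 2 := by simp_rw [mul_pow, mul_comm]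

lemma star_dotProduct_vecMulVec_mulVec (v ψ : n → ℂ) :
    star ψ ⬝ᵥ (vecMulVec v (star v) *ᵥ ψ) = ((‖star v ⬝ᵥ ψ‖ ^ 2 : ℝ) : ℂ) := by
  rw [vecMulVec_mulVec, dotProduct_smul, star_dotProduct]
  simp [Complex.mul_conj']

lemma PosSemidef.re_dotProduct_mulVec_le_card_mul_s9 {A : Matrix n n ℂ} (hA : A.PosSemidef) (ψ : n → ℂ) :
    (star ψ ⬝ᵥ (A *ᵥ ψ)).re ≤ Fintype.card n * ∑ k, ‖ψ k‖ ^ 2 * (A k k).re := by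
  obtain ⟨m, v, rfl⟩ := posSemidef_iff_eq_sum_vecMulVec.mp hA
  have hdiag (i : Fin m) (k : n) :
      (vecMulVec (v i) (star (v i)) k k).re = ‖star (v i) k‖ ^ 2 := by
    simp [vecMulVec_apply, Complex.mul_conj', ← Complex.ofReal_pow]
  simp only [sum_mulVec, dotProduct_sum, Complex.re_sum, Matrix.sum_apply,
    star_dotProduct_vecMulVec_mulVec, Complex.ofReal_re, hdiag]
  calc ∑ i, ‖star (v i) ⬝ᵥ ψ‖ ^ 2
      ≤ ∑ i, Fintype.card n * ∑ k, ‖ψ k‖ ^ 2 * ‖star (v i) k‖ ^ 2 :=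
        Finset.sum_le_sum fun i _ => norm_dotProduct_sq_le_card_mul _ _
    _ = _ := by simp only [Finset.mul_sum]; exact Finset.sum_comm

lemma re_star_dotProduct_diagonal_mulVec [DecidableEq n] (w ψ : n → ℂ) :
    (star ψ ⬝ᵥ (diagonal w *ᵥ ψ)).re = ∑ k, ‖ψ k‖ ^ 2 * (w k).re := by
  simp only [mulVec_diagonal, dotProduct, Pi.star_apply, RCLike.star_def, Complex.re_sum]
  refine Finset.sum_congr rfl fun k _ => ?_
  rw [mul_left_comm, Complex.conj_mul', ← Complex.ofReal_pow, Complex.re_mul_ofReal, mul_comm]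

end Matrix

section

variable {n : Type*} [Fintype n]

open Matrix

lemma star_dotProduct_self_eq_one {ψ : n → ℂ} (hψ : ∑ k, ‖ψ k‖ ^ 2 = 1) : star ψ ⬝ᵥ ψ = 1 := by
  simp [dotProduct, Complex.conj_mul', ← Complex.ofReal_pow, ← Complex.ofReal_sum, hψ]

variable [DecidableEq n]

noncomputable def reliability (p : ℝ) (ψ : n → ℂ) (E : Matrix n n ℂ) : ℝ :=
  ((p : ℂ) * (star ψ ⬝ᵥ (diagonal (fun k => E k k) *ᵥ ψ)) +
    ((1 : ℂ) - (p : ℂ)) * (star ψ ⬝ᵥ ((1 - E) *ᵥ ψ))).re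

lemma reliability_eq (p : ℝ) (ψ : n → ℂ) (E : Matrix n n ℂ) :
    reliability p ψ E =
      p * ∑ k, ‖ψ k‖ ^ 2 * (E k k).re + (1 - p) * (star ψ ⬝ᵥ ((1 - E) *ᵥ ψ)).re := by
  rw [reliability, Complex.add_re, Complex.re_ofReal_mul, re_star_dotProduct_diagonal_mulVec,
    ← Complex.ofReal_one, ← Complex.ofReal_sub, Complex.re_ofReal_mul]

variable {ψ : n → ℂ} (hψ : ∑ k, ‖ψ k‖ ^ 2 = 1)
include hψ

lemma reliability_le [Nonempty n] {p : ℝ} (hp : 0 ≤ p) {E : Matrix n n ℂ} (hE : E.PosSemidef)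
    (hE' : (1 - E).PosSemidef) :
    reliability p ψ E ≤ max p (1 - p / Fintype.card n) := by
  have hunit := star_dotProduct_self_eq_one hψ
  set s := (star ψ ⬝ᵥ ((1 - E) *ᵥ ψ)).re
  set d : ℝ := (Fintype.card n : ℝ)
  have hd : 0 < d := by simp [d, Fintype.card_pos]
  have hs0 : 0 ≤ s := hE'.re_dotProduct_nonneg ψ
  have hs1 : s ≤ 1 := by
    have hEψ : 0 ≤ (star ψ ⬝ᵥ (E *ᵥ ψ)).re := hE.re_dotProduct_nonneg ψ
    simp only [s, sub_mulVec, one_mulVec, dotProduct_sub, hunit, Complex.sub_re, Complex.one_re]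
    linarith
  set a := ∑ k, ‖ψ k‖ ^ 2 * (E k k).re
  have hpinch : s ≤ d * (1 - a) := by
    simpa [mul_sub, Finset.sum_sub_distrib, hψ] using hE'.re_dotProduct_mulVec_le_card_mul_s9 ψ
  have ha : a ≤ 1 - s / d := by
    rw [le_sub_comm, div_le_iff₀ hd]
    linarith
  rw [reliability_eq]
  calc p * a + (1 - p) * s ≤ p * (1 - s / d) + (1 - p) * s := by gcongr
    _ = (1 - s) * p + s * (1 - p / d) := by ring
    _ ≤ (1 - s) * max p (1 - p / d) + s * max p (1 - p / d) := by
        gcongr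
        · exact le_max_left _ _
        · exact le_max_right _ _
    _ = max p (1 - p / d) := by ring

lemma reliability_one (p : ℝ) : reliability p ψ 1 = p := by
  simp [reliability_eq, hψ]

lemma posSemidef_one_sub_vecMulVec : (1 - vecMulVec ψ (star ψ)).PosSemidef := by
  have hunit := star_dotProduct_self_eq_one hψ
  set P := vecMulVec ψ (star ψ)
  have hP : P * P = P := by rw [vecMulVec_mul_vecMulVec, hunit, one_smul]
  have hPH : Pᴴ = P := by rw [conjTranspose_vecMulVec, star_star]
  -- `1 - P` is an orthogonal projection, hence its own Gram matrix.
  convert posSemidef_conjTranspose_mul_self (1 - P) using 1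
  rw [conjTranspose_sub, conjTranspose_one, hPH, sub_mul, mul_sub, mul_sub, hP]
  simp

lemma reliability_one_sub_vecMulVec (p : ℝ) :
    reliability p ψ (1 - vecMulVec ψ (star ψ)) = 1 - p * ∑ k, ‖ψ k‖ ^ 4 := by
  have hunit := star_dotProduct_self_eq_one hψ
  have hdiag (k : n) : ((1 - vecMulVec ψ (star ψ)) k k).re = 1 - ‖ψ k‖ ^ 2 := by
    simp [vecMulVec_apply, Complex.mul_conj', ← Complex.ofReal_pow]
  rw [reliability_eq, sub_sub_cancel, star_dotProduct_vecMulVec_mulVec, star_dotProduct, hunit]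
  simp only [hdiag, mul_sub, mul_one, Finset.sum_sub_distrib, hψ, ← pow_add]
  simp

end

theorem stmt_9_general (d : ℕ) (hd : 0 < d) (ψ : Fin d → ℂ)
    (hψ : ∑ k, ‖ψ k‖ ^ 2 = 1)
    (p : ℝ) (hp0 : 0 < p) :
    max p (1 - p * ∑ k, ‖ψ k‖ ^ 4) ≤
      sSup {r : ℝ | ∃ E : Matrix (Fin d) (Fin d) ℂ, E.PosSemidef ∧ (1 - E).PosSemidef ∧
        r = ((p : ℂ) * (star ψ ⬝ᵥ (Matrix.diagonal (fun k => E k k) *ᵥ ψ)) +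
          ((1 : ℂ) - (p : ℂ)) * (star ψ ⬝ᵥ ((1 - E) *ᵥ ψ))).re} ∧
    sSup {r : ℝ | ∃ E : Matrix (Fin d) (Fin d) ℂ, E.PosSemidef ∧ (1 - E).PosSemidef ∧
        r = ((p : ℂ) * (star ψ ⬝ᵥ (Matrix.diagonal (fun k => E k k) *ᵥ ψ)) +
          ((1 : ℂ) - (p : ℂ)) * (star ψ ⬝ᵥ ((1 - E) *ᵥ ψ))).re} ≤
      max p (1 - p / d) := by
  change max p _ ≤ sSup {r | ∃ E, _ ∧ _ ∧ r = reliability p ψ E} ∧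
    sSup {r | ∃ E, _ ∧ _ ∧ r = reliability p ψ E} ≤ _
  set S := {r | ∃ E : Matrix (Fin d) (Fin d) ℂ, E.PosSemidef ∧ (1 - E).PosSemidef ∧
    r = reliability p ψ E}
  have : Nonempty (Fin d) := ⟨⟨0, hd⟩⟩
  have hle : ∀ r ∈ S, r ≤ max p (1 - p / d) := by
    rintro _ ⟨E, hE, hE', rfl⟩
    simpa using reliability_le hψ hp0.le hE hE'
  have hbdd : BddAbove S := ⟨_, hle⟩
  have hone : p ∈ S := ⟨1, .one, by simpa using PosSemidef.zero, (reliability_one hψ p).symm⟩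
  refine ⟨max_le (le_csSup hbdd hone) (le_csSup hbdd ?_), csSup_le ⟨p, hone⟩ hle⟩
  exact ⟨_, posSemidef_one_sub_vecMulVec hψ, by simpa using posSemidef_vecMulVec_self_star ψ,
    (reliability_one_sub_vecMulVec hψ p).symm⟩

/-- bounds on the maximal reliability. -/
theorem stmt_9 (d : ℕ) (hd : 0 < d) (ψ : Fin d → ℂ)
    (hψ : ∑ k, ‖ψ k‖ ^ 2 = 1)
    (p : ℝ) (hp0 : 0 < p) (hp1 : p < 1) :
    max p (1 - p * ∑ k, ‖ψ k‖ ^ 4) ≤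
      sSup {r : ℝ | ∃ E : Matrix (Fin d) (Fin d) ℂ, E.PosSemidef ∧ (1 - E).PosSemidef ∧
        r = ((p : ℂ) * (star ψ ⬝ᵥ (Matrix.diagonal (fun k => E k k) *ᵥ ψ)) +
          ((1 : ℂ) - (p : ℂ)) * (star ψ ⬝ᵥ ((1 - E) *ᵥ ψ))).re} ∧
    sSup {r : ℝ | ∃ E : Matrix (Fin d) (Fin d) ℂ, E.PosSemidef ∧ (1 - E).PosSemidef ∧
        r = ((p : ℂ) * (star ψ ⬝ᵥ (Matrix.diagonal (fun k => E k k) *ᵥ ψ)) +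
          ((1 : ℂ) - (p : ℂ)) * (star ψ ⬝ᵥ ((1 - E) *ᵥ ψ))).re} ≤
      max p (1 - p / d) :=
  stmt_9_general d hd ψ hψ p hp0
end

section
/- Let ψ ∈ C^d be a unit vector and δ = max_k |ψ_k|². Then for every z > 0, f_ψ(z) = ∑_k |ψ_k|²/(z+|ψ_k|²) ≤ δ/(z+δ) + (1−δ)/(z + (1−δ)/(d−1)). -/
/-!
Split off a largest weight `δ`. The remaining `d - 1` weights sum to `1 - δ`, and since
`x ↦ x / (z + x)` is concave, their contribution is largest when they are all equal to
`(1 - δ) / (d - 1)`.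
-/

/-- `x ↦ x / (z + x)` is concave on `[0, ∞)`, so it lies below its tangent line at `m`. -/
lemma div_add_self_le_tangent {z x m : ℝ} (hz : 0 < z) (hx : 0 ≤ x) (hm : 0 ≤ m) :
    x / (z + x) ≤ m / (z + m) + z / (z + m) ^ 2 * (x - m) := by
  have hzx : 0 < z + x := by linarith
  have hzm : 0 < z + m := by linarith
  rw [mul_comm, ← mul_div_assoc, div_add_div _ _ hzm.ne' (by positivity),
    div_le_div_iff₀ hzx (by positivity)]
  nlinarith [mul_nonneg hz.le (sq_nonneg (x - m)), sq_nonneg (x - m)]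

namespace Finset

/-- Jensen's inequality for `x ↦ x / (z + x)`: sum the tangent lines at the mean `m`, whose
deviation terms `a i - m` add up to zero. -/
lemma sum_div_add_self_le {ι : Type*} (s : Finset ι) (a : ι → ℝ)
    (ha : ∀ i ∈ s, 0 ≤ a i) {z : ℝ} (hz : 0 < z) :
    ∑ i ∈ s, a i / (z + a i) ≤ (∑ i ∈ s, a i) / (z + (∑ i ∈ s, a i) / #s) := by
  set m := (∑ i ∈ s, a i) / #s
  have hm : 0 ≤ m := div_nonneg (sum_nonneg ha) (Nat.cast_nonneg _)
  have hcard_mul : (#s : ℝ) * m = ∑ i ∈ s, a i := by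
    rcases s.eq_empty_or_nonempty with rfl | hs
    · simp
    · exact mul_div_cancel₀ _ (Nat.cast_ne_zero.2 hs.card_pos.ne')
  have hdev : ∑ i ∈ s, (a i - m) = 0 := by
    rw [sum_sub_distrib, sum_const, nsmul_eq_mul, hcard_mul, sub_self]
  calc ∑ i ∈ s, a i / (z + a i)
      ≤ ∑ i ∈ s, (m / (z + m) + z / (z + m) ^ 2 * (a i - m)) :=
        sum_le_sum fun i hi => div_add_self_le_tangent hz (ha i hi) hm
    _ = #s * m / (z + m) := by
        rw [sum_add_distrib, ← mul_sum, hdev, mul_zero, add_zero, sum_const, nsmul_eq_mul,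
          mul_div_assoc]
    _ = (∑ i ∈ s, a i) / (z + m) := by rw [hcard_mul]

end Finset

theorem stmt_13_general (d : ℕ) (ψ : Fin d → ℂ)
    (hψ : ∑ k, ‖ψ k‖ ^ 2 = 1)
    (δ : ℝ) (hδ : IsGreatest (Set.range fun k => ‖ψ k‖ ^ 2) δ)
    (z : ℝ) (hz : 0 < z) :
    ∑ k, ‖ψ k‖ ^ 2 / (z + ‖ψ k‖ ^ 2) ≤
      δ / (z + δ) + (1 - δ) / (z + (1 - δ) / ((d : ℝ) - 1)) := by
  obtain ⟨k₀, hk₀ : ‖ψ k₀‖ ^ 2 = δ⟩ := hδ.1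
  set rest := Finset.univ.erase k₀
  have hrest : ∑ k ∈ rest, ‖ψ k‖ ^ 2 = 1 - δ := by
    rw [← hψ, ← Finset.add_sum_erase _ _ (Finset.mem_univ k₀), ← hk₀, add_sub_cancel_left]
  have hcard : (rest.card : ℝ) = d - 1 := by
    rw [Finset.card_erase_of_mem (Finset.mem_univ k₀), Finset.card_univ, Fintype.card_fin,
      Nat.cast_sub (Nat.one_le_of_lt k₀.isLt), Nat.cast_one]
  rw [← Finset.add_sum_erase _ _ (Finset.mem_univ k₀), hk₀, ← hrest, ← hcard]
  exact add_le_add_right (Finset.sum_div_add_self_le rest _ (fun k _ => sq_nonneg _) hz) _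

/-- a δ-dependent upper bound on f_ψ. -/
theorem stmt_13 (d : ℕ) (hd : 2 ≤ d) (ψ : Fin d → ℂ)
    (hψ : ∑ k, ‖ψ k‖ ^ 2 = 1)
    (δ : ℝ) (hδ : IsGreatest (Set.range fun k => ‖ψ k‖ ^ 2) δ)
    (z : ℝ) (hz : 0 < z) :
    ∑ k, ‖ψ k‖ ^ 2 / (z + ‖ψ k‖ ^ 2) ≤
      δ / (z + δ) + (1 - δ) / (z + (1 - δ) / ((d : ℝ) - 1)) :=
  stmt_13_general d ψ hψ δ hδ z hz
end

section
/- Let ρ be a density matrix on C^d of full rank with smallest eigenvalue p_d > 0, and let p ≤ p_d/(max_k ⟨b_k|ρ|b_k⟩ + p_d). Then the operator A = p·diag ρ − (1−p)ρ is negative semidefinite; consequently E = 0 is an optimal effect operator (blind guessing is optimal). Moreover p_d/(max_k ⟨b_k|ρ|b_k⟩ + p_d) ≤ 1/2. -/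
/-!
Let `p_d` be the least eigenvalue of `ρ` and `m` its largest diagonal entry. Then `ρ - p_d • 1` and
`m • 1 - diag ρ` are positive semidefinite, and
  `-A = (1 - p) (ρ - p_d • 1) + p (m • 1 - diag ρ) + ((1 - p) p_d - p m) • 1`,
whose last coefficient is nonnegative exactly when `p ≤ p_d / (m + p_d)`. The success probability
of an effect `E` differs from that of `E = 0` by `tr (A E)`, which is `≤ 0` when `E ≥ 0`. Finally
`p_d ≤ m`, as every diagonal entry of `ρ` dominates its least eigenvalue; this gives the bound `1 / 2`.
-/

open Matrix
open scoped ComplexOrder MatrixOrder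

namespace Matrix

variable {𝕜 n : Type*} [RCLike 𝕜] [DecidableEq n]

lemma IsHermitian.posSemidef_smul_one_sub_diagonal {A : Matrix n n 𝕜} (hA : A.IsHermitian)
    {c : ℝ} (hc : ∀ k, RCLike.re (A k k) ≤ c) :
    ((c : 𝕜) • 1 - diagonal fun k => A k k).PosSemidef := by
  rw [smul_one_eq_diagonal, diagonal_sub]
  refine PosSemidef.diagonal fun k => ?_
  rw [Pi.zero_apply, ← hA.coe_re_apply_self k, ← RCLike.ofReal_sub, RCLike.ofReal_nonneg]
  exact sub_nonneg.mpr (hc k)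

variable [Fintype n]

lemma PosSemidef.trace_mul_nonneg {A B : Matrix n n 𝕜} (hA : A.PosSemidef)
    (hB : B.PosSemidef) : 0 ≤ (A * B).trace := by
  obtain ⟨C, rfl⟩ := CStarAlgebra.nonneg_iff_eq_star_mul_self.mp hB.nonneg
  rw [← mul_assoc, trace_mul_cycle, star_eq_conjTranspose]
  exact (hA.mul_mul_conjTranspose_same C).trace_nonneg

lemma IsHermitian.posSemidef_sub_smul_one {A : Matrix n n 𝕜} (hA : A.IsHermitian) {c : ℝ}
    (hc : ∀ i, c ≤ hA.eigenvalues i) : (A - (c : 𝕜) • 1).PosSemidef := by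
  rw [← le_iff, ← RCLike.real_smul_eq_coe_smul (K := 𝕜), ← Algebra.algebraMap_eq_smul_one,
    algebraMap_le_iff_le_spectrum hA.isSelfAdjoint, hA.spectrum_real_eq_range_eigenvalues]
  rintro _ ⟨i, rfl⟩
  exact hc i

lemma IsHermitian.le_re_apply_self_of_le_eigenvalues {A : Matrix n n 𝕜} (hA : A.IsHermitian)
    {c : ℝ} (hc : ∀ i, c ≤ hA.eigenvalues i) (k : n) : c ≤ RCLike.re (A k k) := by
  have := RCLike.nonneg_iff.mp ((hA.posSemidef_sub_smul_one hc).diag_nonneg (i := k))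
  simpa [RCLike.smul_re] using this.1

lemma IsHermitian.posSemidef_neg_smul_diagonal_sub_smul {A : Matrix n n 𝕜} (hA : A.IsHermitian)
    {c m p : ℝ} (hc : ∀ i, c ≤ hA.eigenvalues i) (hm : ∀ k, RCLike.re (A k k) ≤ m)
    (hp0 : 0 ≤ p) (hp1 : p ≤ 1) (hp : p * m ≤ (1 - p) * c) :
    (-((p : 𝕜) • diagonal (fun k => A k k) - (1 - (p : 𝕜)) • A)).PosSemidef := by
  have hdecomp : -((p : 𝕜) • diagonal (fun k => A k k) - (1 - (p : 𝕜)) • A) =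
      ((1 - p : ℝ) : 𝕜) • (A - (c : 𝕜) • 1) + (p : 𝕜) • ((m : 𝕜) • 1 - diagonal fun k => A k k)
        + (((1 - p) * c - p * m : ℝ) : 𝕜) • 1 := by
    push_cast
    module
  rw [hdecomp]
  refine (((hA.posSemidef_sub_smul_one hc).smul ?_).add
    ((hA.posSemidef_smul_one_sub_diagonal hm).smul ?_)).add (PosSemidef.one.smul ?_) <;>
  rw [RCLike.ofReal_nonneg] <;> linarith

lemma trace_mul_diagonal_diag (A B : Matrix n n 𝕜) :
    (A * diagonal fun k => B k k).trace = (diagonal (fun k => A k k) * B).trace := by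
  simp [trace, mul_apply, diagonal_apply]

lemma re_trace_mul_smul_diagonal_add_le {ρ E : Matrix n n 𝕜} {p : ℝ}
    (hA : (-((p : 𝕜) • diagonal (fun k => ρ k k) - (1 - (p : 𝕜)) • ρ)).PosSemidef)
    (hE : E.PosSemidef) :
    RCLike.re (ρ * ((p : 𝕜) • diagonal (fun k => E k k) + (1 - (p : 𝕜)) • (1 - E))).trace ≤
      RCLike.re (ρ * (1 - (p : 𝕜)) • (1 : Matrix n n 𝕜)).trace := by
  have htrace : (ρ * ((p : 𝕜) • diagonal (fun k => E k k) + (1 - (p : 𝕜)) • (1 - E))).trace =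
      (ρ * (1 - (p : 𝕜)) • (1 : Matrix n n 𝕜)).trace -
        ((-((p : 𝕜) • diagonal (fun k => ρ k k) - (1 - (p : 𝕜)) • ρ)) * E).trace := by
    simp only [mul_add, mul_sub, neg_mul, sub_mul, mul_smul_comm, smul_mul_assoc, mul_one,
      trace_add, trace_sub, trace_neg, trace_smul, trace_mul_diagonal_diag ρ E]
    ring
  rw [htrace, map_sub, sub_le_self_iff]
  exact (RCLike.nonneg_iff.mp (hA.trace_mul_nonneg hE)).1

end Matrix

theorem stmt_16_general (d : ℕ) (ρ : Matrix (Fin d) (Fin d) ℂ)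
    (hρ : ρ.PosDef)
    (pd : ℝ) (hpd : IsLeast (Set.range hρ.1.eigenvalues) pd)
    (m : ℝ) (hm : IsGreatest (Set.range fun k => (ρ k k).re) m)
    (p : ℝ) (hp0 : 0 < p) (hp1 : p < 1) (hp : p ≤ pd / (m + pd)) :
    (-((p : ℂ) • Matrix.diagonal (fun k => ρ k k) - ((1 : ℂ) - (p : ℂ)) • ρ)).PosSemidef ∧
    (∀ E : Matrix (Fin d) (Fin d) ℂ, E.PosSemidef → (1 - E).PosSemidef →
      ((ρ * ((p : ℂ) • Matrix.diagonal (fun k => E k k) + ((1 : ℂ) - (p : ℂ)) • (1 - E))).trace).re ≤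
      ((ρ * ((1 : ℂ) - (p : ℂ)) • (1 : Matrix (Fin d) (Fin d) ℂ)).trace).re) ∧
    pd / (m + pd) ≤ 1 / 2 := by
  obtain ⟨⟨i, rfl⟩, hpd_le⟩ := hpd
  obtain ⟨⟨k, rfl⟩, hm_ge⟩ := hm
  have hc : ∀ j, hρ.1.eigenvalues i ≤ hρ.1.eigenvalues j := fun j => hpd_le ⟨j, rfl⟩
  have hpd_pos : 0 < hρ.1.eigenvalues i := hρ.eigenvalues_pos i
  have hpd_le_m : hρ.1.eigenvalues i ≤ (ρ k k).re := hρ.1.le_re_apply_self_of_le_eigenvalues hc k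
  have hsum_pos : 0 < (ρ k k).re + hρ.1.eigenvalues i := by linarith
  have hA := hρ.1.posSemidef_neg_smul_diagonal_sub_smul hc (fun j => hm_ge ⟨j, rfl⟩) hp0.le
    hp1.le (by rw [le_div_iff₀ hsum_pos] at hp; linarith)
  refine ⟨hA, fun E hE _ => re_trace_mul_smul_diagonal_add_le hA hE, ?_⟩
  rw [div_le_div_iff₀ hsum_pos two_pos]
  linarith

/-- for full-rank ρ and small p, blind guessing (E = 0) is optimal. -/
theorem stmt_16 (d : ℕ) (hd : 0 < d) (ρ : Matrix (Fin d) (Fin d) ℂ)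
    (hρ : ρ.PosDef) (hρt : ρ.trace = 1)
    (pd : ℝ) (hpd : IsLeast (Set.range hρ.1.eigenvalues) pd)
    (m : ℝ) (hm : IsGreatest (Set.range fun k => (ρ k k).re) m)
    (p : ℝ) (hp0 : 0 < p) (hp1 : p < 1) (hp : p ≤ pd / (m + pd)) :
    (-((p : ℂ) • Matrix.diagonal (fun k => ρ k k) - ((1 : ℂ) - (p : ℂ)) • ρ)).PosSemidef ∧
    (∀ E : Matrix (Fin d) (Fin d) ℂ, E.PosSemidef → (1 - E).PosSemidef →
      ((ρ * ((p : ℂ) • Matrix.diagonal (fun k => E k k) + ((1 : ℂ) - (p : ℂ)) • (1 - E))).trace).re ≤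
      ((ρ * ((1 : ℂ) - (p : ℂ)) • (1 : Matrix (Fin d) (Fin d) ℂ)).trace).re) ∧
    pd / (m + pd) ≤ 1 / 2 :=
  stmt_16_general d ρ hρ pd hpd m hm p hp0 hp1 hp
end
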